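/- Define m₀, m₁, m₂ : ℤ → ℝ supported on {−1, 0, 1} by m₀ = (1/3)·(1, 1, 1), m₁ = (√6/6)·(1, 0, −1), m₂ = (√2/6)·(1, −2, 1), with adjoints m̃_p(k) = m_p(−k), and write u^{*l} for the l-fold convolution power of a sequence u (with u^{*0} = δ, the Kronecker delta). Then for every L ≥ 1 and every finitely supported sequence I : ℤ → ℝ, the multi-level perfect reconstruction identity holds: I = m̃₀^{*L} * m₀^{*L} * I + Σ_{l=1}^{L} m̃₀^{*(l−1)} * ( Σ_{p=1}^{2} m̃_p * m_p * m₀^{*(l−1)} * I ). -/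

import Mathlib

/-- The low-pass filter `m₀ = (1/3)·(1,1,1)` supported on `{-1,0,1}`. -/
noncomputable def m0 : ℤ → ℝ := fun k => if k = -1 ∨ k = 0 ∨ k = 1 then 1 / 3 else 0

/-- The high-pass filter `m₁ = (√6/6)·(1,0,−1)` supported on `{-1,0,1}`. -/
noncomputable def m1 : ℤ → ℝ := fun k =>
  if k = -1 then Real.sqrt 6 / 6 else if k = 1 then -(Real.sqrt 6 / 6) else 0

/-- The high-pass filter `m₂ = (√2/6)·(1,−2,1)` supported on `{-1,0,1}`. -/
noncomputable def m2 : ℤ → ℝ := fun k =>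
  if k = -1 ∨ k = 1 then Real.sqrt 2 / 6 else if k = 0 then -(2 * Real.sqrt 2 / 6) else 0

/-- Convolution of sequences on `ℤ`: `(u * v)(k) = Σ_{j∈ℤ} u(j)·v(k − j)`. -/
noncomputable def conv (u v : ℤ → ℝ) : ℤ → ℝ := fun k => ∑ᶠ j : ℤ, u j * v (k - j)

/-- `l`-fold convolution power `u^{*l}`, with `u^{*0} = δ` the Kronecker delta. -/
noncomputable def convPow (u : ℤ → ℝ) : ℕ → ℤ → ℝ
  | 0 => fun k => if k = 0 then 1 else 0
  | n + 1 => conv u (convPow u n)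

section Helpers

open Pointwise

open Function

/-- Generic: convolution written as a finite sum over a finset containing the support
of the first factor. -/
lemma conv_eq_sum {u : ℤ → ℝ} {s : Finset ℤ} (hs : ∀ j, u j ≠ 0 → j ∈ s)
    (v : ℤ → ℝ) (k : ℤ) : conv u v k = ∑ j ∈ s, u j * v (k - j) := by
  apply finsum_eq_sum_of_support_subset
  intro j hj
  have : u j ≠ 0 := by
    intro h0; apply hj; simp [h0]
  exact hs j this

lemma support_conv_subset (u v : ℤ → ℝ) :
    support (conv u v) ⊆ support u + support v := by
  intro k hk
  have : ∃ j, u j * v (k - j) ≠ 0 := by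
    by_contra h
    push_neg at h
    apply hk
    simp only [conv]
    exact finsum_eq_zero_of_forall_eq_zero h
  obtain ⟨j, hj⟩ := this
  have hu : u j ≠ 0 := fun h => hj (by simp [h])
  have hv : v (k - j) ≠ 0 := fun h => hj (by simp [h])
  exact Set.mem_add.mpr ⟨j, hu, k - j, hv, by ring⟩

lemma fs_conv {u v : ℤ → ℝ} (hu : (support u).Finite) (hv : (support v).Finite) :
    (support (conv u v)).Finite :=
  (hu.add hv).subset (support_conv_subset u v)

lemma fs_add {u v : ℤ → ℝ} (hu : (support u).Finite) (hv : (support v).Finite) :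
    (support (fun x => u x + v x)).Finite := by
  apply (hu.union hv).subset
  intro x hx
  by_contra h
  simp only [Set.mem_union, mem_support] at h
  push_neg at h
  exact hx (by simp [h.1, h.2] : u x + v x = 0)

lemma fs_neg {u : ℤ → ℝ} (hu : (support u).Finite) :
    (support (fun j => u (-j))).Finite := by
  apply (hu.image (fun x => -x)).subset
  intro j hj
  exact ⟨-j, hj, by ring⟩

lemma conv_comm (u v : ℤ → ℝ) (k : ℤ) : conv u v k = conv v u k := by
  simp only [conv]
  rw [← finsum_comp (fun j => k - j) (Equiv.subLeft k).bijective]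
  apply finsum_congr
  intro j
  have : k - (k - j) = j := by ring
  rw [this, mul_comm]

lemma delta_conv (v : ℤ → ℝ) (k : ℤ) :
    conv (fun j => if j = (0:ℤ) then (1:ℝ) else 0) v k = v k := by
  simp only [conv]
  rw [finsum_eq_single _ 0 (fun b hb => by simp [hb])]
  simp

lemma fs_delta : (support (fun j : ℤ => if j = (0:ℤ) then (1:ℝ) else 0)).Finite := by
  apply (Set.finite_singleton (0:ℤ)).subset
  intro x hx
  simp only [mem_support, ne_eq, ite_eq_right_iff, not_forall] at hx
  simp [hx.1]

lemma fs_convPow {u : ℤ → ℝ} (hu : (support u).Finite) (n : ℕ) :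
    (support (convPow u n)).Finite := by
  induction n with
  | zero => exact fs_delta
  | succ n ih => exact fs_conv hu ih

lemma conv_add_right {u : ℤ → ℝ} (hu : (support u).Finite) (v w : ℤ → ℝ) (k : ℤ) :
    conv u (fun x => v x + w x) k = conv u v k + conv u w k := by
  simp only [conv]
  have h1 : (support fun j => u j * v (k - j)).Finite := by
    apply hu.subset; intro j hj; by_contra h
    exact hj (by simp [Function.notMem_support.mp h])
  have h2 : (support fun j => u j * w (k - j)).Finite := by
    apply hu.subset; intro j hj; by_contra h
    exact hj (by simp [Function.notMem_support.mp h])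
  rw [← finsum_add_distrib h1 h2]
  apply finsum_congr; intro j; ring

lemma conv_add_left {u v : ℤ → ℝ} (hu : (support u).Finite) (hv : (support v).Finite)
    (w : ℤ → ℝ) (k : ℤ) :
    conv (fun x => u x + v x) w k = conv u w k + conv v w k := by
  simp only [conv]
  have h1 : (support fun j => u j * w (k - j)).Finite := by
    apply hu.subset; intro j hj; by_contra h
    exact hj (by simp [Function.notMem_support.mp h])
  have h2 : (support fun j => v j * w (k - j)).Finite := by
    apply hv.subset; intro j hj; by_contra h
    exact hj (by simp [Function.notMem_support.mp h])
  rw [← finsum_add_distrib h1 h2]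
  apply finsum_congr; intro j; ring

lemma conv_assoc {u v : ℤ → ℝ} (hu : (support u).Finite) (hv : (support v).Finite)
    (w : ℤ → ℝ) (k : ℤ) :
    conv (conv u v) w k = conv u (conv v w) k := by
  classical
  set Su : Finset ℤ := hu.toFinset with hSu
  set T : Finset ℤ := (hu.add hv).toFinset with hT
  have hTsub : ∀ j, conv u v j ≠ 0 → j ∈ T := by
    intro j hj
    have := support_conv_subset u v (mem_support.mpr hj)
    simpa [hT] using this
  have hSsub : ∀ j, u j ≠ 0 → j ∈ Su := by
    intro j hj; simpa [hSu] using hj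
  rw [conv_eq_sum hTsub w k, conv_eq_sum hSsub (conv v w) k]
  have step1 : ∀ j ∈ T, conv u v j * w (k - j)
      = ∑ i ∈ Su, u i * v (j - i) * w (k - j) := by
    intro j _
    rw [conv_eq_sum hSsub v j, Finset.sum_mul]
  rw [Finset.sum_congr rfl step1, Finset.sum_comm]
  apply Finset.sum_congr rfl
  intro i hi
  have hui : u i ≠ 0 := by simpa [hSu] using hi
  have hsub : ∀ j, v (j - i) * w (k - j) ≠ 0 → j ∈ T := by
    intro j hj
    have hvj : v (j - i) ≠ 0 := fun h => hj (by simp [h])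
    have : j ∈ support u + support v :=
      Set.mem_add.mpr ⟨i, hui, j - i, hvj, by ring⟩
    simpa [hT] using this
  have hss : Function.support (fun j => v (j - i) * w (k - j)) ⊆ ↑T := by
    intro j hj
    have : v (j - i) * w (k - j) ≠ 0 := hj
    exact_mod_cast hsub j this
  have key : ∑ j ∈ T, u i * v (j - i) * w (k - j)
      = u i * ∑ᶠ j, v (j - i) * w (k - j) := by
    rw [finsum_eq_sum_of_support_subset _ hss, Finset.mul_sum]
    apply Finset.sum_congr rfl; intro j _; ring
  rw [key]
  congr 1
  rw [← finsum_comp (fun t => i + t) (Equiv.addLeft i).bijective]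
  apply finsum_congr
  intro t
  have e1 : i + t - i = t := by ring
  have e2 : k - (i + t) = k - i - t := by ring
  rw [e1, e2]

end Helpers

section Filters

open Function

lemma m0_zero {x : ℤ} (h : ¬(x = -1 ∨ x = 0 ∨ x = 1)) : m0 x = 0 := if_neg h

lemma m1_zero {x : ℤ} (h : ¬(x = -1 ∨ x = 0 ∨ x = 1)) : m1 x = 0 := by
  push_neg at h
  simp [m1, h.1, h.2.2]

lemma m2_zero {x : ℤ} (h : ¬(x = -1 ∨ x = 0 ∨ x = 1)) : m2 x = 0 := by
  push_neg at h
  simp [m2, h.1, h.2.1, h.2.2]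

lemma fs_m0 : (support m0).Finite := by
  apply (((Set.finite_singleton (1:ℤ)).insert 0).insert (-1)).subset
  intro x hx
  by_contra h
  simp only [Set.mem_insert_iff, Set.mem_singleton_iff] at h
  push_neg at h
  exact hx (m0_zero (by tauto))

lemma fs_m1 : (support m1).Finite := by
  apply (((Set.finite_singleton (1:ℤ)).insert 0).insert (-1)).subset
  intro x hx
  by_contra h
  simp only [Set.mem_insert_iff, Set.mem_singleton_iff] at h
  push_neg at h
  exact hx (m1_zero (by tauto))

lemma fs_m2 : (support m2).Finite := by
  apply (((Set.finite_singleton (1:ℤ)).insert 0).insert (-1)).subset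
  intro x hx
  by_contra h
  simp only [Set.mem_insert_iff, Set.mem_singleton_iff] at h
  push_neg at h
  exact hx (m2_zero (by tauto))

lemma sum_three (f : ℤ → ℝ) :
    ∑ j ∈ ({-1, 0, 1} : Finset ℤ), f j = f (-1) + f 0 + f 1 := by
  rw [show ({-1, 0, 1} : Finset ℤ) = {-1, 0, 1} from rfl]
  rw [Finset.sum_insert (by decide), Finset.sum_insert (by decide),
    Finset.sum_singleton]
  ring

/-- The tight-frame kernel identity: `m̃₀*m₀ + m̃₁*m₁ + m̃₂*m₂ = δ`. -/
lemma kernel_identity (k : ℤ) :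
    conv (fun j => m0 (-j)) m0 k
      + (conv (fun j => m1 (-j)) m1 k + conv (fun j => m2 (-j)) m2 k)
    = (if k = 0 then (1:ℝ) else 0) := by
  have h0 : ∀ j : ℤ, m0 (-j) ≠ 0 → j ∈ ({-1, 0, 1} : Finset ℤ) := by
    intro j hj
    by_contra h
    simp only [Finset.mem_insert, Finset.mem_singleton] at h
    push_neg at h
    exact hj (m0_zero (by omega))
  have h1 : ∀ j : ℤ, m1 (-j) ≠ 0 → j ∈ ({-1, 0, 1} : Finset ℤ) := by
    intro j hj
    by_contra h
    simp only [Finset.mem_insert, Finset.mem_singleton] at h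
    push_neg at h
    exact hj (m1_zero (by omega))
  have h2 : ∀ j : ℤ, m2 (-j) ≠ 0 → j ∈ ({-1, 0, 1} : Finset ℤ) := by
    intro j hj
    by_contra h
    simp only [Finset.mem_insert, Finset.mem_singleton] at h
    push_neg at h
    exact hj (m2_zero (by omega))
  rw [conv_eq_sum h0 m0 k, conv_eq_sum h1 m1 k, conv_eq_sum h2 m2 k,
    sum_three, sum_three, sum_three]
  have s6 : Real.sqrt 6 * Real.sqrt 6 = 6 := Real.mul_self_sqrt (by norm_num)
  have s2 : Real.sqrt 2 * Real.sqrt 2 = 2 := Real.mul_self_sqrt (by norm_num)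
  by_cases hk : k = -2 ∨ k = -1 ∨ k = 0 ∨ k = 1 ∨ k = 2
  · rcases hk with h | h | h | h | h <;> subst h <;>
      norm_num [m0, m1, m2] <;> nlinarith [s6, s2]
  · push_neg at hk
    have e1 : m0 (k - -1) = 0 := m0_zero (by omega)
    have e2 : m0 (k - 0) = 0 := m0_zero (by omega)
    have e3 : m0 (k - 1) = 0 := m0_zero (by omega)
    have f1 : m1 (k - -1) = 0 := m1_zero (by omega)
    have f2 : m1 (k - 0) = 0 := m1_zero (by omega)
    have f3 : m1 (k - 1) = 0 := m1_zero (by omega)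
    have g1 : m2 (k - -1) = 0 := m2_zero (by omega)
    have g2 : m2 (k - 0) = 0 := m2_zero (by omega)
    have g3 : m2 (k - 1) = 0 := m2_zero (by omega)
    rw [e1, e2, e3, f1, f2, f3, g1, g2, g3, if_neg (by omega : ¬ k = 0)]
    ring

/-- One level of perfect reconstruction. -/
lemma one_level (J : ℤ → ℝ) (hJ : (Function.support J).Finite) (k : ℤ) :
    J k = conv (fun j => m0 (-j)) (conv m0 J) k
      + (conv (fun j => m1 (-j)) (conv m1 J) k
          + conv (fun j => m2 (-j)) (conv m2 J) k) := by
  have a0 := conv_assoc (fs_neg fs_m0) fs_m0 J k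
  have a1 := conv_assoc (fs_neg fs_m1) fs_m1 J k
  have a2 := conv_assoc (fs_neg fs_m2) fs_m2 J k
  rw [← a0, ← a1, ← a2]
  have K0 := fs_conv (fs_neg fs_m0) fs_m0
  have K1 := fs_conv (fs_neg fs_m1) fs_m1
  have K2 := fs_conv (fs_neg fs_m2) fs_m2
  rw [← conv_add_left K1 K2 J k, ← conv_add_left K0 (fs_add K1 K2) J k]
  have : (fun x => conv (fun j => m0 (-j)) m0 x
      + (conv (fun j => m1 (-j)) m1 x + conv (fun j => m2 (-j)) m2 x))
      = (fun j : ℤ => if j = (0:ℤ) then (1:ℝ) else 0) := by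
    funext x
    exact kernel_identity x
  rw [this, delta_conv]

/-- The multi-level identity, proved for all `n` (including `n = 0`). -/
lemma multi_level_aux (n : ℕ) (I : ℤ → ℝ) (hI : (Function.support I).Finite) (k : ℤ) :
    I k =
      conv (convPow (fun j => m0 (-j)) n) (conv (convPow m0 n) I) k
      + ∑ l ∈ Finset.Icc 1 n,
          conv (convPow (fun j => m0 (-j)) (l - 1))
            (fun x =>
              conv (fun j => m1 (-j)) (conv m1 (conv (convPow m0 (l - 1)) I)) x
              + conv (fun j => m2 (-j)) (conv m2 (conv (convPow m0 (l - 1)) I)) x) k := by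
  induction n with
  | zero =>
    simp only [convPow, Finset.Icc_self, Finset.Icc_eq_empty_of_lt (by norm_num : (1:ℕ) > 0)]
    rw [delta_conv, delta_conv]
    simp
  | succ n ih =>
    rw [Finset.sum_Icc_succ_top (by omega : 1 ≤ n + 1)]
    have hQ : (Function.support (convPow m0 n)).Finite := fs_convPow fs_m0 n
    have hP : (Function.support (convPow (fun j => m0 (-j)) n)).Finite :=
      fs_convPow (fs_neg fs_m0) n
    set J : ℤ → ℝ := conv (convPow m0 n) I with hJdef
    have hJ : (Function.support J).Finite := fs_conv hQ hI
    have hone : J = fun x => conv (fun j => m0 (-j)) (conv m0 J) x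
        + (conv (fun j => m1 (-j)) (conv m1 J) x
            + conv (fun j => m2 (-j)) (conv m2 J) x) := by
      funext x
      exact one_level J hJ x
    have step : conv (convPow (fun j => m0 (-j)) n) J k
        = conv (convPow (fun j => m0 (-j)) (n + 1))
            (conv (convPow m0 (n + 1)) I) k
          + conv (convPow (fun j => m0 (-j)) n)
              (fun x =>
                conv (fun j => m1 (-j)) (conv m1 J) x
                + conv (fun j => m2 (-j)) (conv m2 J) x) k := by
      conv_lhs => rw [hone]
      rw [conv_add_right hP]
      congr 1
      -- conv P_n (conv m̃0 (conv m0 J)) = conv P_{n+1} (conv Q_{n+1} I)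
      rw [← conv_assoc hP (fs_neg fs_m0) (conv m0 J) k]
      have c1 : conv (convPow (fun j => m0 (-j)) n) (fun j => m0 (-j))
          = convPow (fun j => m0 (-j)) (n + 1) := by
        funext x
        rw [conv_comm]
        rfl
      rw [c1]
      have c2 : conv m0 J = conv (convPow m0 (n + 1)) I := by
        funext x
        rw [hJdef, ← conv_assoc fs_m0 hQ I x]
        rfl
      rw [c2]
    have hl : (n + 1) - 1 = n := by omega
    rw [ih, step, hl]
    ring


/-- **Multi-level perfect reconstruction of the tight framelet decomposition:**
for every `L ≥ 1` and every finitely supported `I : ℤ → ℝ`,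
`I = m̃₀^{*L} * m₀^{*L} * I + Σ_{l=1}^{L} m̃₀^{*(l−1)} * (Σ_{p=1}^{2} m̃_p * m_p * m₀^{*(l−1)} * I)`,
where `m̃_p(k) = m_p(−k)`. -/
theorem multi_level_perfect_reconstruction (L : ℕ) (hL : 1 ≤ L) (I : ℤ → ℝ)
    (hI : (Function.support I).Finite) (k : ℤ) :
    I k =
      conv (convPow (fun j => m0 (-j)) L) (conv (convPow m0 L) I) k
      + ∑ l ∈ Finset.Icc 1 L,
          conv (convPow (fun j => m0 (-j)) (l - 1))
            (fun x =>
              conv (fun j => m1 (-j)) (conv m1 (conv (convPow m0 (l - 1)) I)) x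
              + conv (fun j => m2 (-j)) (conv m2 (conv (convPow m0 (l - 1)) I)) x) k :=
  multi_level_aux L I hI k
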